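/- Let k have characteristic 3 and define the Lie superalgebra d_{2,1} = (sp(V)⊕sp(V)⊕sp(V)) ⊕ (V⊗V⊗V), with even part sp(V)³ acting componentwise on V⊗V⊗V and odd bracket [u₁⊗u₂⊗u₃, v₁⊗v₂⊗v₃] = −Σ_{i=1}^{3} (∏_{j≠i} ⟨u_j|v_j⟩) ν_i(γ_{u_i,v_i}), where ν_i is the inclusion into the i-th component. Then d_{2,1} is a Lie superalgebra: in particular the super-Jacobi identity holds on three odd elements. -/

import Mathlib

/-! In each tensor slot `i` put `aᵢ = ⟨vᵢ|wᵢ⟩uᵢ`, `bᵢ = ⟨wᵢ|uᵢ⟩vᵢ`, `cᵢ = ⟨uᵢ|vᵢ⟩wᵢ`. As the form is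
alternating, `γ_{uᵢ,vᵢ}(wᵢ) = aᵢ - bᵢ`, so `[[u,v],w]` is minus the derivative of
`g ↦ g₀ ⊗ g₁ ⊗ g₂` at `c` in the direction `a - b`; cyclically permuting `u, v, w` permutes
`a, b, c` cyclically. In dimension 2 the alternating trilinear map
`(x, y, z) ↦ ⟨x|y⟩z + ⟨y|z⟩x + ⟨z|x⟩y` vanishes, so `a + b + c = 0`. Then in characteristic 3, with
`x ⊗ y` read slotwise as `xᵢ ⊗ yⱼ`, all three directions `a - b`, `b - c`, `c - a` coincide,
`a ⊗ a + b ⊗ b + c ⊗ c = -(a - b) ⊗ (a - b)`, and the Jacobiator becomes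
`3 (a - b) ⊗ (a - b) ⊗ (a - b) = 0`. -/

open scoped TensorProduct

section

variable {k V : Type*} [Field k] [AddCommGroup V] [Module k V]

/-- The operator `γ_{x,y} : z ↦ ⟨x|z⟩y + ⟨y|z⟩x`. -/
noncomputable def gamma (B : LinearMap.BilinForm k V) (x y : V) : V →ₗ[k] V :=
  (B x).smulRight y + (B y).smulRight x

/-- The element `[[u₁⊗u₂⊗u₃, v₁⊗v₂⊗v₃], w₁⊗w₂⊗w₃]` of the odd part
`V⊗V⊗V` of `d_{2,1}`: the bracket of two odd elements is
`−Σᵢ (∏_{j≠i} ⟨u_j|v_j⟩) νᵢ(γ_{uᵢ,vᵢ})`, acting componentwise on `w₁⊗w₂⊗w₃`. -/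
noncomputable def d21OddJac (B : LinearMap.BilinForm k V)
    (u v w : Fin 3 → V) : V ⊗[k] (V ⊗[k] V) :=
  -((B (u 1) (v 1) * B (u 2) (v 2)) •
      ((gamma B (u 0) (v 0)) (w 0) ⊗ₜ[k] (w 1 ⊗ₜ[k] w 2))
    + (B (u 0) (v 0) * B (u 2) (v 2)) •
      ((w 0) ⊗ₜ[k] ((gamma B (u 1) (v 1)) (w 1) ⊗ₜ[k] w 2))
    + (B (u 0) (v 0) * B (u 1) (v 1)) •
      ((w 0) ⊗ₜ[k] (w 1 ⊗ₜ[k] (gamma B (u 2) (v 2)) (w 2))))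

end

open TensorProduct

theorem LinearMap.BilinForm.IsAlt.smul_add_smul_add_smul_eq_zero {k V : Type*} [Field k]
    [AddCommGroup V] [Module k V] {B : LinearMap.BilinForm k V} (hB : B.IsAlt)
    (hdim : Module.finrank k V = 2) (x y z : V) :
    B x y • z + B y z • x + B z x • y = 0 := by
  have : Module.Finite k V := Module.finite_of_finrank_eq_succ hdim
  let e := Module.finBasisOfFinrankEq k V hdim
  have coords (v : V) : ∃ p q : k, v = p • e 0 + q • e 1 :=
    ⟨e.repr v 0, e.repr v 1, by simpa only [Fin.sum_univ_two] using (e.sum_repr v).symm⟩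
  obtain ⟨x₀, x₁, rfl⟩ := coords x
  obtain ⟨y₀, y₁, rfl⟩ := coords y
  obtain ⟨z₀, z₁, rfl⟩ := coords z
  have h₁₀ : B (e 1) (e 0) = -B (e 0) (e 1) := (LinearMap.IsAlt.neg hB _ _).symm
  simp only [map_add, map_smul, LinearMap.add_apply, LinearMap.smul_apply, smul_eq_mul,
    hB (e 0), hB (e 1), h₁₀]
  module

def tmul3Deriv {R M : Type*} [CommSemiring R] [AddCommMonoid M] [Module R M]
    (f g : Fin 3 → M) : M ⊗[R] (M ⊗[R] M) :=
  f 0 ⊗ₜ (g 1 ⊗ₜ g 2) + g 0 ⊗ₜ (f 1 ⊗ₜ g 2) + g 0 ⊗ₜ (g 1 ⊗ₜ f 2)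

theorem tmul3Deriv_cyclic_sum_eq_zero {R M : Type*} [CommRing R] [CharP R 3] [AddCommGroup M]
    [Module R M] (a b c : Fin 3 → M) (habc : a + b + c = 0) :
    tmul3Deriv (R := R) (a - b) c + tmul3Deriv (b - c) a + tmul3Deriv (c - a) b = 0 := by
  have h3 : (3 : R) = 0 := CharP.cast_eq_zero R 3
  obtain rfl : c = -a - b := by linear_combination (norm := module) habc
  -- over `ℤ` the left side is `-3 • d ⊗ d ⊗ d + 9 • (a ⊗ a ⊗ a - b ⊗ b ⊗ b)`, where `d = a - b`
  linear_combination (norm := skip) h3 • (-((a 0 - b 0) ⊗ₜ ((a 1 - b 1) ⊗ₜ[R] (a 2 - b 2)))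
    + (3 : R) • (a 0 ⊗ₜ (a 1 ⊗ₜ[R] a 2) - b 0 ⊗ₜ (b 1 ⊗ₜ[R] b 2)))
  simp only [tmul3Deriv, Pi.sub_apply, Pi.neg_apply, tmul_sub, sub_tmul, tmul_neg, neg_tmul]
  module

theorem d21OddJac_eq_neg_tmul3Deriv {k V : Type*} [Field k] [AddCommGroup V] [Module k V]
    {B : LinearMap.BilinForm k V} (hB : B.IsAlt) (u v w : Fin 3 → V) :
    d21OddJac B u v w = -tmul3Deriv (fun i => B (v i) (w i) • u i - B (w i) (u i) • v i)
      (fun i => B (u i) (v i) • w i) := by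
  have hγ (x y z : V) : gamma B x y z = B y z • x - B z x • y := by
    rw [gamma, LinearMap.add_apply, LinearMap.smulRight_apply, LinearMap.smulRight_apply,
      ← LinearMap.IsAlt.neg hB, neg_smul, add_comm, sub_eq_add_neg]
  simp only [d21OddJac, tmul3Deriv, hγ, tmul_smul, ← smul_tmul']
  module

theorem stmt18_general (k : Type*) [Field k] [CharP k 3]
    (V : Type*) [AddCommGroup V] [Module k V]
    (hdim : Module.finrank k V = 2)
    (B : LinearMap.BilinForm k V) (halt : B.IsAlt) :
    ∀ u v w : Fin 3 → V,
      d21OddJac B u v w + d21OddJac B v w u + d21OddJac B w u v = 0 := by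
  intro u v w
  simp only [d21OddJac_eq_neg_tmul3Deriv halt]
  rw [← neg_add, ← neg_add, neg_eq_zero]
  exact tmul3Deriv_cyclic_sum_eq_zero _ _ _ <| funext fun i =>
    halt.smul_add_smul_add_smul_eq_zero hdim (v i) (w i) (u i)

/-- Over a field of characteristic 3, the bracket of
`d_{2,1} = (sp(V)⊕sp(V)⊕sp(V)) ⊕ (V⊗V⊗V)` satisfies the super-Jacobi identity
on three odd elements:
`[[x,y],z] + [[y,z],x] + [[z,x],y] = 0` for decomposable odd elements. -/
theorem stmt18 (k : Type*) [Field k] [CharP k 3]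
    (V : Type*) [AddCommGroup V] [Module k V]
    (hdim : Module.finrank k V = 2)
    (B : LinearMap.BilinForm k V) (halt : B.IsAlt) (hnd : B.Nondegenerate) :
    ∀ u v w : Fin 3 → V,
      d21OddJac B u v w + d21OddJac B v w u + d21OddJac B w u v = 0 :=
  stmt18_general k V hdim B halt
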